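/- Let P be a finite ranked poset with rank function r taking maximum value R, let P_i = {p ∈ P : r(p) = i}, let t_i be the composition of the toggles at all elements of P_i, and set t_even = ∏_{i even} t_i and t_odd = ∏_{i odd} t_i (both well defined, since t_i and t_j commute whenever |i − j| > 1). Then the composite t_even ∘ t_odd is conjugate to the Fon-Der-Flaass action Ψ in the toggle group G(P). -/

import Mathlib

open Classical

namespace FDF

variable {α : Type*} [PartialOrder α] [DecidableEq α]

/-- `I` is an order ideal (down-set) of the poset `α`. -/
def IsIdeal (I : Finset α) : Prop := ∀ ⦃x y : α⦄, y ∈ I → x ≤ y → x ∈ I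

/-- The toggle `t_p`. -/
noncomputable def toggle (p : α) (I : Finset α) : Finset α :=
  if p ∈ I ∧ ∀ y ∈ I, ¬ p < y then I.erase p
  else if p ∉ I ∧ IsIdeal (insert p I) then insert p I
  else I

variable [Fintype α]

/-- The Fon-Der-Flaass action on finsets: the down-closure of the set of minimal
elements of the complement of `I`. -/
noncomputable def fdf (I : Finset α) : Finset α :=
  Finset.univ.filter (fun x => ∃ y, y ∉ I ∧ (∀ z, z < y → z ∈ I) ∧ x ≤ y)

theorem isIdeal_fdf (I : Finset α) : IsIdeal (fdf I) := by
  intro x y hy hxy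
  simp only [fdf, Finset.mem_filter, Finset.mem_univ, true_and] at *
  obtain ⟨y', h1, h2, h3⟩ := hy
  exact ⟨y', h1, h2, le_trans hxy h3⟩

theorem mem_iff_fdf {I : Finset α} (hI : IsIdeal I) (x : α) :
    x ∈ I ↔ ∀ y, (y ∈ fdf I ∧ ∀ z ∈ fdf I, ¬ y < z) → ¬ y ≤ x := by
  constructor
  · rintro hx y ⟨hyf, hymax⟩ hyx
    -- y is a maximal element of fdf I; show y ∈ U(I), i.e. y ∉ I, contradiction with y ≤ x ∈ I
    simp only [fdf, Finset.mem_filter, Finset.mem_univ, true_and] at hyf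
    obtain ⟨y', h1, h2, h3⟩ := hyf
    have hy'f : y' ∈ fdf I := by
      simp only [fdf, Finset.mem_filter, Finset.mem_univ, true_and]
      exact ⟨y', h1, h2, le_refl _⟩
    have : y = y' := by
      rcases lt_or_eq_of_le h3 with h | h
      · exact absurd h (hymax y' hy'f)
      · exact h
    subst this
    exact h1 (hI hx hyx)
  · intro h
    by_contra hx
    -- find a minimal element of the complement below x
    have hne : (Finset.univ.filter (fun z => z ∉ I ∧ z ≤ x)).Nonempty :=
      ⟨x, by simp [hx]⟩
    obtain ⟨y, hy, hymin⟩ : ∃ m ∈ Finset.univ.filter (fun z => z ∉ I ∧ z ≤ x),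
        ∀ t ∈ Finset.univ.filter (fun z => z ∉ I ∧ z ≤ x), ¬ t < m := by
      obtain ⟨m, hm⟩ := Finset.exists_minimal hne
      exact ⟨m, hm.1, fun t ht hlt => not_le_of_gt hlt (hm.2 ht hlt.le)⟩
    simp only [Finset.mem_filter, Finset.mem_univ, true_and] at hy
    have hUy : y ∉ I ∧ ∀ z, z < y → z ∈ I := by
      refine ⟨hy.1, fun z hz => ?_⟩
      by_contra hzI
      exact hymin z (by simp [hzI, le_trans hz.le hy.2]) hz
    have hyf : y ∈ fdf I := by
      simp only [fdf, Finset.mem_filter, Finset.mem_univ, true_and]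
      exact ⟨y, hUy.1, hUy.2, le_refl _⟩
    refine h y ⟨hyf, ?_⟩ hy.2
    intro t htf hyt
    simp only [fdf, Finset.mem_filter, Finset.mem_univ, true_and] at htf
    obtain ⟨y'', h1, h2, h3⟩ := htf
    exact hUy.1 (h2 y (lt_of_lt_of_le hyt h3))

/-- The type of order ideals of `α`. -/
abbrev Ideals (α : Type*) [PartialOrder α] := {I : Finset α // IsIdeal I}

noncomputable instance : Fintype (Ideals α) := Fintype.ofFinite _

/-- The Fon-Der-Flaass action as a permutation of the set of order ideals. -/
noncomputable def fdfPerm (α : Type*) [PartialOrder α] [Fintype α] [DecidableEq α] :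
    Equiv.Perm (Ideals α) :=
  Equiv.ofBijective (fun I => ⟨fdf I.1, isIdeal_fdf I.1⟩)
    (Finite.injective_iff_bijective.mp (by
      rintro ⟨I, hI⟩ ⟨J, hJ⟩ h
      have h' : fdf I = fdf J := congrArg Subtype.val h
      refine Subtype.ext (Finset.ext fun x => ?_)
      rw [mem_iff_fdf hI, mem_iff_fdf hJ, h']))

theorem isIdeal_toggle (p : α) {I : Finset α} (hI : IsIdeal I) : IsIdeal (toggle p I) := by
  unfold toggle
  split_ifs with h1 h2
  · intro x y hy hxy
    rw [Finset.mem_erase] at hy ⊢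
    refine ⟨fun hxp => ?_, hI hy.2 hxy⟩
    subst hxp
    rcases lt_or_eq_of_le hxy with h | h
    · exact h1.2 y hy.2 h
    · exact hy.1 h.symm
  · exact h2.2
  · exact hI

theorem toggle_toggle (p : α) {I : Finset α} (hI : IsIdeal I) : toggle p (toggle p I) = I := by
  by_cases h1 : p ∈ I ∧ ∀ y ∈ I, ¬ p < y
  · have e1 : toggle p I = I.erase p := by unfold toggle; rw [if_pos h1]
    rw [e1]
    have h2 : ¬ (p ∈ I.erase p ∧ ∀ y ∈ I.erase p, ¬ p < y) := by
      simp [Finset.mem_erase]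
    have h3 : p ∉ I.erase p ∧ IsIdeal (insert p (I.erase p)) := by
      refine ⟨by simp, ?_⟩
      rw [Finset.insert_erase h1.1]
      exact hI
    unfold toggle
    rw [if_neg h2, if_pos h3, Finset.insert_erase h1.1]
  · by_cases h2 : p ∉ I ∧ IsIdeal (insert p I)
    · have e1 : toggle p I = insert p I := by unfold toggle; rw [if_neg h1, if_pos h2]
      rw [e1]
      have h3 : p ∈ insert p I ∧ ∀ y ∈ insert p I, ¬ p < y := by
        refine ⟨Finset.mem_insert_self _ _, fun y hy hpy => ?_⟩
        rcases Finset.mem_insert.mp hy with h | h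
        · subst h; exact lt_irrefl _ hpy
        · exact h2.1 (hI h hpy.le)
      unfold toggle
      rw [if_pos h3, Finset.erase_insert h2.1]
    · have e1 : toggle p I = I := by unfold toggle; rw [if_neg h1, if_neg h2]
      rw [e1]
      unfold toggle
      rw [if_neg h1, if_neg h2]

/-- The toggle `t_p` as a permutation of the set of order ideals. -/
noncomputable def togglePerm (p : α) : Equiv.Perm (Ideals α) where
  toFun I := ⟨toggle p I.1, isIdeal_toggle p I.2⟩
  invFun I := ⟨toggle p I.1, isIdeal_toggle p I.2⟩
  left_inv I := Subtype.ext (toggle_toggle p I.2)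
  right_inv I := Subtype.ext (toggle_toggle p I.2)

/-- The toggle group `G(P)`. -/
noncomputable def toggleGroup (α : Type*) [PartialOrder α] [Fintype α] [DecidableEq α] :
    Subgroup (Equiv.Perm (Ideals α)) :=
  Subgroup.closure (Set.range (togglePerm (α := α)))

end FDF

/-!
Write `t_i` for the product of the toggles at rank `i`. Toggles at two distinct elements
neither of which covers the other commute, so `t_i` and `t_j` commute when `|i - j| ≥ 2`;
and toggling along a linear extension from the top down is the Fon-Der-Flaass action,
so `Ψ = t_0 t_1 ⋯ t_R`. What remains is a fact about any group elements `s_0, …, s_R`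
with `s_i s_j = s_j s_i` for `|i - j| ≥ 2`: the word `s_0 s_1 ⋯ s_R` is conjugate to
`(s_0 s_2 ⋯)(s_1 s_3 ⋯)` in the group they generate, since one word is turned into the
other by cyclic shifts `xy ↦ yx` and commutations. Keeping the conjugators of the
shorter words inside `⟨s_{k+1}, s_{k+2}, …⟩` lets the induction prepend `s_k`.
-/

namespace FDF

open Subgroup Set

section Coxeter

variable {G : Type*} [Group G]

def IsConjIn (H : Subgroup G) (x y : G) : Prop := ∃ g ∈ H, g * x * g⁻¹ = y

namespace IsConjIn

variable {H K : Subgroup G} {x y z : G}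

theorem refl (H : Subgroup G) (x : G) : IsConjIn H x x := ⟨1, H.one_mem, by group⟩

theorem trans (hxy : IsConjIn H x y) (hyz : IsConjIn H y z) : IsConjIn H x z := by
  obtain ⟨g, hg, rfl⟩ := hxy
  obtain ⟨h, hh, rfl⟩ := hyz
  exact ⟨h * g, H.mul_mem hh hg, by group⟩

instance : Trans (IsConjIn H) (IsConjIn H) (IsConjIn H) := ⟨trans⟩

theorem mono (hHK : H ≤ K) (h : IsConjIn H x y) : IsConjIn K x y :=
  let ⟨g, hg, hgxy⟩ := h
  ⟨g, hHK hg, hgxy⟩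

theorem mul_left {a : G} (ha : ∀ g ∈ H, Commute a g) (h : IsConjIn H x y) :
    IsConjIn H (a * x) (a * y) := by
  obtain ⟨g, hg, rfl⟩ := h
  refine ⟨g, hg, ?_⟩
  rw [← mul_assoc g, ← (ha g hg).eq]
  group

theorem mul_comm (hx : x ∈ H) : IsConjIn H (x * y) (y * x) :=
  ⟨x⁻¹, H.inv_mem hx, by group⟩

end IsConjIn

theorem commute_of_mem_closure_range {a : G} {s : ℕ → G} (ha : ∀ i, Commute a (s i)) {g : G}
    (hg : g ∈ closure (range s)) : Commute a g := by
  induction hg using closure_induction with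
  | mem _ hx => obtain ⟨i, rfl⟩ := hx; exact ha i
  | one => exact Commute.one_right a
  | mul _ _ _ _ h₁ h₂ => exact h₁.mul_right h₂
  | inv _ _ h => exact h.inv_right

variable (s : ℕ → G)

def coxeterProd (n : ℕ) : G := ((List.range n).map s).prod

def evenProd (n : ℕ) : G := (((List.range n).filter (fun i => decide (i % 2 = 0))).map s).prod

def oddProd (n : ℕ) : G := (((List.range n).filter (fun i => decide (i % 2 = 1))).map s).prod

theorem list_prod_map_mem_closure_range (l : List ℕ) : (l.map s).prod ∈ closure (range s) :=
  list_prod_mem fun _ hx => by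
    obtain ⟨i, -, rfl⟩ := List.mem_map.mp hx
    exact subset_closure (mem_range_self i)

@[simp] theorem coxeterProd_zero : coxeterProd s 0 = 1 := rfl
@[simp] theorem evenProd_zero : evenProd s 0 = 1 := rfl
@[simp] theorem oddProd_zero : oddProd s 0 = 1 := rfl

theorem coxeterProd_succ (n : ℕ) :
    coxeterProd s (n + 1) = s 0 * coxeterProd (fun i => s (i + 1)) n := by
  simp [coxeterProd, List.range_succ_eq_map, Function.comp_def]

theorem evenProd_succ (n : ℕ) :
    evenProd s (n + 1) = s 0 * oddProd (fun i => s (i + 1)) n := by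
  simp [evenProd, oddProd, List.range_succ_eq_map, List.filter_map, Function.comp_def,
    Nat.succ_mod_two_eq_zero_iff]

theorem oddProd_succ (n : ℕ) :
    oddProd s (n + 1) = evenProd (fun i => s (i + 1)) n := by
  simp [evenProd, oddProd, List.range_succ_eq_map, List.filter_map, Function.comp_def,
    Nat.succ_mod_two_eq_one_iff]

variable {s}

theorem isConjIn_coxeterProd_swap (hcomm : ∀ i j, i + 2 ≤ j → Commute (s i) (s j)) (m : ℕ) :
    IsConjIn (closure (range fun i => s (i + 1)))
      (s 1 * s 0 * coxeterProd (fun i => s (i + 2)) m) (coxeterProd s (m + 2)) := by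
  induction m generalizing s with
  | zero =>
    simpa [coxeterProd_succ] using IsConjIn.mul_comm (subset_closure (mem_range_self 0))
  | succ m ih =>
    have h1 : Commute (s 1) (coxeterProd (fun i => s (i + 3)) m) :=
      commute_of_mem_closure_range (fun i => hcomm 1 (i + 3) (by omega))
        (list_prod_map_mem_closure_range _ _)
    have h0 : ∀ g ∈ closure (range fun i => s (i + 2)), Commute (s 0) g :=
      fun _ => commute_of_mem_closure_range (fun i => hcomm 0 (i + 2) (by omega))
    have hmono : closure (range fun i => s (i + 2)) ≤ closure (range fun i => s (i + 1)) :=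
      closure_mono (by rintro _ ⟨i, rfl⟩; exact ⟨i + 1, rfl⟩)
    calc s 1 * s 0 * coxeterProd (fun i => s (i + 2)) (m + 1)
        = s 1 * (s 0 * s 2 * coxeterProd (fun i => s (i + 3)) m) := by
          rw [coxeterProd_succ]; group
      IsConjIn (closure (range fun i => s (i + 1))) _
          (s 0 * s 2 * coxeterProd (fun i => s (i + 3)) m * s 1) :=
        IsConjIn.mul_comm (subset_closure ⟨0, rfl⟩)
      _ = s 0 * (s 2 * s 1 * coxeterProd (fun i => s (i + 3)) m) := by
          rw [mul_assoc _ _ (s 1), ← h1.eq]; group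
      IsConjIn (closure (range fun i => s (i + 1))) _
          (s 0 * coxeterProd (fun i => s (i + 1)) (m + 2)) :=
        ((ih (fun i j hij => hcomm (i + 1) (j + 1) (by omega))).mul_left h0).mono hmono
      _ = coxeterProd s (m + 3) := (coxeterProd_succ s _).symm

theorem isConjIn_oddProd_mul_evenProd (hcomm : ∀ i j, i + 2 ≤ j → Commute (s i) (s j))
    (n : ℕ) : IsConjIn (closure (range fun i => s (i + 1)))
      (oddProd s n * evenProd s n) (coxeterProd s n) := by
  induction n using Nat.twoStepInduction generalizing s with
  | zero => simpa using IsConjIn.refl _ 1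
  | one => simpa [oddProd_succ, evenProd_succ, coxeterProd_succ] using IsConjIn.refl _ (s 0)
  | more n ih _ =>
    have h0 : Commute (s 0) (oddProd (fun i => s (i + 2)) n) :=
      commute_of_mem_closure_range (fun i => hcomm 0 (i + 2) (by omega))
        (list_prod_map_mem_closure_range _ _)
    have h10 : ∀ g ∈ closure (range fun i => s (i + 3)), Commute (s 1 * s 0) g :=
      fun _ => commute_of_mem_closure_range fun i =>
        (hcomm 1 (i + 3) (by omega)).mul_left (hcomm 0 (i + 3) (by omega))
    have hmono : closure (range fun i => s (i + 3)) ≤ closure (range fun i => s (i + 1)) :=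
      closure_mono (by rintro _ ⟨i, rfl⟩; exact ⟨i + 2, rfl⟩)
    calc oddProd s (n + 2) * evenProd s (n + 2)
        = s 1 * s 0 * (oddProd (fun i => s (i + 2)) n * evenProd (fun i => s (i + 2)) n) := by
          rw [oddProd_succ, evenProd_succ, evenProd_succ, oddProd_succ]
          change s 1 * _ * (s 0 * _) = _
          rw [mul_assoc (s 1), ← mul_assoc _ (s 0), ← h0.eq]
          group
      IsConjIn (closure (range fun i => s (i + 1))) _
          (s 1 * s 0 * coxeterProd (fun i => s (i + 2)) n) :=
        ((ih (fun i j hij => hcomm (i + 2) (j + 2) (by omega))).mul_left h10).mono hmono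
      IsConjIn (closure (range fun i => s (i + 1))) _ (coxeterProd s (n + 2)) :=
        isConjIn_coxeterProd_swap hcomm n

theorem isConjIn_evenProd_mul_oddProd (hcomm : ∀ i j, i + 2 ≤ j → Commute (s i) (s j))
    (n : ℕ) : IsConjIn (closure (range s)) (evenProd s n * oddProd s n) (coxeterProd s n) :=
  (IsConjIn.mul_comm (list_prod_map_mem_closure_range s _)).trans
    ((isConjIn_oddProd_mul_evenProd hcomm n).mono
      (closure_mono (by rintro _ ⟨i, rfl⟩; exact ⟨i + 1, rfl⟩)))

end Coxeter

section Toggles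

variable {α : Type*} [PartialOrder α] [DecidableEq α]

theorem IsIdeal.insert {S : Finset α} (hS : IsIdeal S) {p : α} (hp : ∀ z < p, z ∈ S) :
    IsIdeal (insert p S) := by
  intro x y hy hxy
  rcases Finset.mem_insert.mp hy with rfl | hy
  · rcases hxy.eq_or_lt with rfl | hlt
    · exact Finset.mem_insert_self x S
    · exact Finset.mem_insert_of_mem (hp x hlt)
  · exact Finset.mem_insert_of_mem (hS hy hxy)

theorem mem_toggle_of_ne {p x : α} (h : x ≠ p) (S : Finset α) : x ∈ toggle p S ↔ x ∈ S := by
  unfold toggle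
  split_ifs <;> simp [h]

theorem mem_toggle_self_iff {S : Finset α} (hS : IsIdeal S) (p : α) :
    p ∈ toggle p S ↔ (∃ y ∈ S, p < y) ∨ (p ∉ S ∧ ∀ z < p, z ∈ S) := by
  unfold toggle
  split_ifs with hdel hadd
  · simp only [Finset.mem_erase, ne_eq, not_true_eq_false, false_and, false_iff, not_or,
      not_exists, not_and]
    exact ⟨hdel.2, fun h => absurd hdel.1 h⟩
  · simp only [Finset.mem_insert_self, true_iff]
    refine Or.inr ⟨hadd.1, fun z hz => ?_⟩
    exact (Finset.mem_insert.mp (hadd.2 (Finset.mem_insert_self p S) hz.le)).resolve_left hz.ne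
  · push Not at hdel hadd
    constructor
    · exact fun hp => Or.inl (hdel hp)
    · rintro (⟨y, hy, hpy⟩ | ⟨hp, hbelow⟩)
      · exact hS hy hpy.le
      · exact absurd (hS.insert hbelow) (hadd hp)

theorem exists_gt_mem_of_eqOn_ne {A B : Finset α} (hA : IsIdeal A) {p q : α}
    (hAB : ∀ x ≠ q, x ∈ A ↔ x ∈ B) (hpq : ¬ p ⋖ q) (h : ∃ y ∈ A, p < y) : ∃ y ∈ B, p < y := by
  obtain ⟨y, hyA, hpy⟩ := h
  by_cases hyq : y = q
  · subst hyq
    obtain ⟨w, hpw, hwy⟩ := (not_covBy_iff hpy).mp hpq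
    exact ⟨w, (hAB w hwy.ne).mp (hA hyA hwy.le), hpw⟩
  · exact ⟨y, (hAB y hyq).mp hyA, hpy⟩

theorem forall_lt_mem_of_eqOn_ne {A B : Finset α} (hB : IsIdeal B) {p q : α}
    (hAB : ∀ x ≠ q, x ∈ A ↔ x ∈ B) (hqp : ¬ q ⋖ p) (h : ∀ z < p, z ∈ A) : ∀ z < p, z ∈ B := by
  intro z hz
  by_cases hzq : z = q
  · subst hzq
    obtain ⟨w, hzw, hwp⟩ := (not_covBy_iff hz).mp hqp
    exact hB ((hAB w hzw.ne').mp (h w hwp)) hzw.le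
  · exact (hAB z hzq).mp (h z hz)

theorem mem_toggle_self_congr {A B : Finset α} (hA : IsIdeal A) (hB : IsIdeal B) {p q : α}
    (hAB : ∀ x ≠ q, x ∈ A ↔ x ∈ B) (hne : p ≠ q) (hpq : ¬ p ⋖ q) (hqp : ¬ q ⋖ p) :
    p ∈ toggle p A ↔ p ∈ toggle p B := by
  have hBA : ∀ x ≠ q, x ∈ B ↔ x ∈ A := fun x hx => (hAB x hx).symm
  have above : (∃ y ∈ A, p < y) ↔ ∃ y ∈ B, p < y :=
    ⟨exists_gt_mem_of_eqOn_ne hA hAB hpq, exists_gt_mem_of_eqOn_ne hB hBA hpq⟩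
  have below : (∀ z < p, z ∈ A) ↔ ∀ z < p, z ∈ B :=
    ⟨forall_lt_mem_of_eqOn_ne hB hAB hqp, forall_lt_mem_of_eqOn_ne hA hBA hqp⟩
  rw [mem_toggle_self_iff hA, mem_toggle_self_iff hB, hAB p hne, above, below]

variable [Fintype α]

theorem mem_toggle_toggle_self {S : Finset α} (hS : IsIdeal S) {p q : α} (hne : p ≠ q)
    (hpq : ¬ p ⋖ q) (hqp : ¬ q ⋖ p) :
    p ∈ toggle p (toggle q S) ↔ p ∈ toggle q (toggle p S) := by
  rw [mem_toggle_of_ne hne]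
  exact mem_toggle_self_congr (isIdeal_toggle q hS) hS (fun x hx => mem_toggle_of_ne hx S)
    hne hpq hqp

theorem toggle_comm {S : Finset α} (hS : IsIdeal S) {p q : α} (hne : p ≠ q)
    (hpq : ¬ p ⋖ q) (hqp : ¬ q ⋖ p) :
    toggle p (toggle q S) = toggle q (toggle p S) := by
  ext x
  by_cases hxp : x = p
  · subst hxp
    exact mem_toggle_toggle_self hS hne hpq hqp
  by_cases hxq : x = q
  · subst hxq
    exact (mem_toggle_toggle_self hS hne.symm hqp hpq).symm
  rw [mem_toggle_of_ne hxp, mem_toggle_of_ne hxq, mem_toggle_of_ne hxq, mem_toggle_of_ne hxp]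

theorem commute_togglePerm {p q : α} (hne : p ≠ q) (hpq : ¬ p ⋖ q) (hqp : ¬ q ⋖ p) :
    Commute (togglePerm p) (togglePerm q) :=
  Equiv.ext fun I => Subtype.ext (toggle_comm I.2 hne hpq hqp)

theorem list_prod_togglePerm_mem_toggleGroup (l : List α) :
    (l.map togglePerm).prod ∈ toggleGroup α :=
  list_prod_mem fun _ hx => by
    obtain ⟨p, -, rfl⟩ := List.mem_map.mp hx
    exact Subgroup.subset_closure (Set.mem_range_self p)

end Toggles

section FonDerFlaass

variable {α : Type*} [PartialOrder α] [DecidableEq α] [Fintype α]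

theorem isIdeal_foldr_toggle (l : List α) {I : Finset α} (hI : IsIdeal I) :
    IsIdeal (l.foldr toggle I) := by
  induction l with
  | nil => exact hI
  | cons a l ih => exact isIdeal_toggle a ih

theorem mem_fdf_iff (I : Finset α) (x : α) :
    x ∈ fdf I ↔ ∃ y, y ∉ I ∧ (∀ z, z < y → z ∈ I) ∧ x ≤ y := by
  simp [fdf]

theorem mem_fdf_iff_exists_gt_or (I : Finset α) (a : α) :
    a ∈ fdf I ↔ (∃ y ∈ fdf I, a < y) ∨ (a ∉ I ∧ ∀ z < a, z ∈ I) := by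
  constructor
  · intro ha
    obtain ⟨m, hmI, hmin, ham⟩ := (mem_fdf_iff I a).mp ha
    rcases ham.eq_or_lt with rfl | hlt
    · exact Or.inr ⟨hmI, hmin⟩
    · exact Or.inl ⟨m, (mem_fdf_iff I m).mpr ⟨m, hmI, hmin, le_rfl⟩, hlt⟩
  · rintro (⟨y, hy, hay⟩ | ⟨haI, hmin⟩)
    · exact isIdeal_fdf I hy hay.le
    · exact (mem_fdf_iff I a).mpr ⟨a, haI, hmin, le_rfl⟩

/- `l.foldr toggle I` toggles the last entry of `l` first, so `hext` makes the toggles run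
from the top of `l` down. -/
theorem mem_foldr_toggle_iff {l : List α} (hnd : l.Nodup) (hup : IsUpperSet {x | x ∈ l})
    (hext : l.Pairwise fun a b => ¬ b < a) {I : Finset α} (hI : IsIdeal I) (x : α) :
    x ∈ l.foldr toggle I ↔ if x ∈ l then x ∈ fdf I else x ∈ I := by
  induction l generalizing x with
  | nil => simp
  | cons a l ih =>
    obtain ⟨ha, hnd⟩ := List.nodup_cons.mp hnd
    obtain ⟨ha_min, hext⟩ := List.pairwise_cons.mp hext
    have hup' : IsUpperSet {x | x ∈ l} := by
      intro x y hxy hx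
      refine (List.mem_cons.mp (hup hxy (List.mem_cons_of_mem a hx))).resolve_left ?_
      rintro rfl
      exact ha (hxy.eq_of_not_lt (ha_min x hx) ▸ hx)
    have ih := ih hnd hup' hext
    rw [List.foldr_cons]
    by_cases hxa : x = a
    · subst hxa
      set S := l.foldr toggle I
      have above : ∀ y, x < y → (y ∈ S ↔ y ∈ fdf I) := fun y hxy => by
        have hy : y ∈ l :=
          (List.mem_cons.mp (hup hxy.le List.mem_cons_self)).resolve_left hxy.ne'
        rw [ih, if_pos hy]
      have below : ∀ z, z < x → (z ∈ S ↔ z ∈ I) := fun z hzx => by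
        rw [ih, if_neg fun hz => ha_min z hz hzx]
      rw [mem_toggle_self_iff (isIdeal_foldr_toggle l hI), if_pos List.mem_cons_self,
        mem_fdf_iff_exists_gt_or, ih, if_neg ha]
      refine or_congr ⟨?_, ?_⟩ (and_congr_right fun _ => forall₂_congr below)
      · exact fun ⟨y, hy, hxy⟩ => ⟨y, (above y hxy).mp hy, hxy⟩
      · exact fun ⟨y, hy, hxy⟩ => ⟨y, (above y hxy).mpr hy, hxy⟩
    · rw [mem_toggle_of_ne hxa, ih]
      simp only [List.mem_cons, hxa, false_or]

theorem coe_list_prod_togglePerm (l : List α) (I : Ideals α) :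
    ((l.map togglePerm).prod I).1 = l.foldr toggle I.1 := by
  induction l with
  | nil => rfl
  | cons a l ih => exact congrArg (toggle a) ih

theorem list_prod_togglePerm_eq_fdfPerm {l : List α} (hnd : l.Nodup) (hmem : ∀ x, x ∈ l)
    (hext : l.Pairwise fun a b => ¬ b < a) : (l.map togglePerm).prod = fdfPerm α := by
  refine Equiv.ext fun I => Subtype.ext (Finset.ext fun x => ?_)
  rw [coe_list_prod_togglePerm, mem_foldr_toggle_iff hnd (fun _ _ _ _ => hmem _) hext I.2,
    if_pos (hmem x)]
  rfl

end FonDerFlaass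

section Ranked

variable {P : Type*} [PartialOrder P] {r : P → ℤ}

theorem strictMono_of_covBy_add_one [Finite P] (hrcov : ∀ x y : P, y ⋖ x → r x = r y + 1) :
    StrictMono r := by
  have := Fintype.ofFinite P
  let := Fintype.toLocallyFiniteOrder (α := P)
  exact (strictMono_iff_forall_covBy r).mpr fun a b hab => by rw [hrcov b a hab]; omega

theorem rank_nonneg [Finite P] (hr0 : ∀ p : P, (∀ q : P, ¬ q < p) → r p = 0) (hmono : Monotone r)
    (p : P) : 0 ≤ r p := by
  obtain ⟨m, hmp, hmin⟩ := exists_minimal_le_of_wellFoundedLT (fun _ => True) p trivial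
  rw [← hr0 m fun q => hmin.not_lt trivial]
  exact hmono hmp

variable [DecidableEq P] {L : ℕ → List P}

theorem commute_prod_togglePerm_of_add_two_le [Fintype P]
    (hrcov : ∀ x y : P, y ⋖ x → r x = r y + 1) (hLmem : ∀ (i : ℕ) (p : P), p ∈ L i ↔ r p = i)
    {i j : ℕ} (hij : i + 2 ≤ j) :
    Commute ((L i).map togglePerm).prod ((L j).map togglePerm).prod := by
  refine Commute.list_prod_left _ _ fun _ hx => Commute.list_prod_right _ _ fun _ hy => ?_
  obtain ⟨p, hp, rfl⟩ := List.mem_map.mp hx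
  obtain ⟨q, hq, rfl⟩ := List.mem_map.mp hy
  rw [hLmem] at hp hq
  refine commute_togglePerm ?_ (fun h => ?_) (fun h => ?_)
  · rintro rfl
    omega
  · have := hrcov q p h
    omega
  · have := hrcov p q h
    omega

theorem coxeterProd_prod_togglePerm_eq_fdfPerm [Fintype P] (hmono : StrictMono r)
    (hnonneg : ∀ p, 0 ≤ r p) {R : ℕ} (hRle : ∀ p, r p ≤ R) (hLnd : ∀ i, (L i).Nodup)
    (hLmem : ∀ (i : ℕ) (p : P), p ∈ L i ↔ r p = i) :
    coxeterProd (fun i => ((L i).map togglePerm).prod) (R + 1) = fdfPerm P := by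
  have hflat : coxeterProd (fun i => ((L i).map togglePerm).prod) (R + 1) =
      (((List.range (R + 1)).flatMap L).map togglePerm).prod := by
    simp [coxeterProd, List.flatMap_def, List.prod_flatten, Function.comp_def]
  rw [hflat]
  refine list_prod_togglePerm_eq_fdfPerm ?_ (fun p => ?_) ?_
  · refine List.nodup_flatMap.mpr ⟨fun i _ => hLnd i, List.pairwise_lt_range.imp ?_⟩
    intro i j hij p hpi hpj
    rw [hLmem] at hpi hpj
    omega
  · refine List.mem_flatMap.mpr ⟨(r p).toNat, List.mem_range.mpr ?_, (hLmem _ _).mpr ?_⟩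
    · have := hRle p
      omega
    · exact Int.toNat_of_nonneg (hnonneg p) |>.symm
  · refine List.pairwise_flatMap.mpr
      ⟨fun i _ => (hLnd i).imp_of_mem ?_, List.pairwise_lt_range.imp ?_⟩
    · intro p q hp hq _ hqp
      rw [hLmem] at hp hq
      exact (hmono hqp).ne (hq.trans hp.symm)
    · intro i j hij p hp q hq hqp
      rw [hLmem] at hp hq
      have := hmono hqp
      omega

end Ranked

end FDF

theorem fdfPerm_isConj_teven_todd_general
    {P : Type*} [PartialOrder P] [Fintype P] [DecidableEq P]
    (r : P → ℤ)
    (hr0 : ∀ p : P, (∀ q : P, ¬ q < p) → r p = 0)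
    (hrcov : ∀ x y : P, y ⋖ x → r x = r y + 1)
    (R : ℕ) (hRle : ∀ p : P, r p ≤ (R : ℤ))
    (L : ℕ → List P) (hLnd : ∀ i : ℕ, (L i).Nodup)
    (hLmem : ∀ (i : ℕ) (p : P), p ∈ L i ↔ r p = (i : ℤ))
 :
    ∃ g ∈ FDF.toggleGroup P,
      g * ((((List.range (R + 1)).filter (fun i => decide (i % 2 = 0))).map
              (fun i => ((L i).map FDF.togglePerm).prod)).prod *
           (((List.range (R + 1)).filter (fun i => decide (i % 2 = 1))).map
              (fun i => ((L i).map FDF.togglePerm).prod)).prod) * g⁻¹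
        = FDF.fdfPerm P := by
  have hmono : StrictMono r := FDF.strictMono_of_covBy_add_one hrcov
  obtain ⟨g, hg, hconj⟩ := FDF.isConjIn_evenProd_mul_oddProd
    (fun i j hij => FDF.commute_prod_togglePerm_of_add_two_le hrcov hLmem hij) (R + 1)
  refine ⟨g, (Subgroup.closure_le _).mpr ?_ hg, ?_⟩
  · rintro _ ⟨i, rfl⟩
    exact FDF.list_prod_togglePerm_mem_toggleGroup (L i)
  · rw [← FDF.coxeterProd_prod_togglePerm_eq_fdfPerm hmono
      (FDF.rank_nonneg hr0 hmono.monotone) hRle hLnd hLmem]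
    exact hconj

/-- For a finite ranked poset `P` with rank function `r` of maximum value `R`, with
`t_i` the composition of the toggles at the rank-`i` elements,
`t_even = ∏_{i even} t_i` and `t_odd = ∏_{i odd} t_i`, the composite `t_even ∘ t_odd`
is conjugate to the Fon-Der-Flaass action `Ψ` in the toggle group `G(P)`. -/
theorem fdfPerm_isConj_teven_todd
    {P : Type*} [PartialOrder P] [Fintype P] [DecidableEq P]
    (r : P → ℤ)
    (hr0 : ∀ p : P, (∀ q : P, ¬ q < p) → r p = 0)
    (hrcov : ∀ x y : P, y ⋖ x → r x = r y + 1)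
    (R : ℕ) (hRle : ∀ p : P, r p ≤ (R : ℤ)) (hRmax : ∃ p : P, r p = (R : ℤ))
    (L : ℕ → List P) (hLnd : ∀ i : ℕ, (L i).Nodup)
    (hLmem : ∀ (i : ℕ) (p : P), p ∈ L i ↔ r p = (i : ℤ))
 :
    ∃ g ∈ FDF.toggleGroup P,
      g * ((((List.range (R + 1)).filter (fun i => decide (i % 2 = 0))).map
              (fun i => ((L i).map FDF.togglePerm).prod)).prod *
           (((List.range (R + 1)).filter (fun i => decide (i % 2 = 1))).map
              (fun i => ((L i).map FDF.togglePerm).prod)).prod) * g⁻¹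
        = FDF.fdfPerm P :=
  fdfPerm_isConj_teven_todd_general r hr0 hrcov R hRle L hLnd hLmem
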